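/- For any convex system of means M, one has M((1/2, 1/2), (1, 0)) ≥ 1/2. -/

import Mathlib

open scoped NNReal ENNReal BigOperators

/-- The power mean `M_p` of order `p ∈ [0,∞]` with weights `w` and arguments `x`. -/
noncomputable def powerMean (p : ℝ≥0∞) {n : ℕ} (w x : Fin n → ℝ≥0) : ℝ≥0 :=
  if p = ∞ then (Finset.univ.filter (fun i => 0 < w i)).sup x
  else if p = 0 then ∏ i, x i ^ ((w i : ℝ))
  else (∑ i, w i * x i ^ p.toReal) ^ (1 / p.toReal)

/-- A system of means: for each `n`, a function `M n : Δ_n × ℝ≥0ⁿ → ℝ≥0`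
(defined on all of `ℝ≥0ⁿ × ℝ≥0ⁿ`, with the axioms demanded only when `∑ w = 1`),
satisfying functoriality, consistency and monotonicity. -/
structure MeanSystem where
  M : ∀ n : ℕ, (Fin n → ℝ≥0) → (Fin n → ℝ≥0) → ℝ≥0
  functorial : ∀ {m n : ℕ} (f : Fin m → Fin n) (w : Fin m → ℝ≥0),
    (∑ i, w i) = 1 → ∀ x : Fin n → ℝ≥0,
      M n (fun j => ∑ i ∈ Finset.univ.filter (fun i => f i = j), w i) x = M m w (x ∘ f)
  consistent : ∀ c : ℝ≥0, M 1 (fun _ => 1) (fun _ => c) = c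
  mono : ∀ {n : ℕ} (w x y : Fin n → ℝ≥0), (∑ i, w i) = 1 →
    (∀ i, x i ≤ y i) → M n w x ≤ M n w y

/-- Multiplicativity of a system of means, with respect to the fixed bijection
`finProdFinEquiv : Fin m × Fin n ≃ Fin (m * n)`. -/
def MeanSystem.IsMultiplicative (S : MeanSystem) : Prop :=
  ∀ {m n : ℕ} (w x : Fin m → ℝ≥0) (v y : Fin n → ℝ≥0),
    (∑ i, w i) = 1 → (∑ j, v j) = 1 →
    S.M (m * n) (fun k => w (finProdFinEquiv.symm k).1 * v (finProdFinEquiv.symm k).2)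
        (fun k => x (finProdFinEquiv.symm k).1 * y (finProdFinEquiv.symm k).2)
      = S.M m w x * S.M n v y

/-- Convexity of a system of means. -/
def MeanSystem.IsConvex (S : MeanSystem) : Prop :=
  ∀ {n : ℕ} (w x y : Fin n → ℝ≥0), (∑ i, w i) = 1 →
    S.M n w (fun i => (x i + y i) / 2) ≤ max (S.M n w x) (S.M n w y)

/-! Swapping the two coordinates fixes the weights `(1/2, 1/2)`, so by functoriality
`M(w, (1,0)) = M(w, (0,1))`. Convexity bounds the mean of the midpoint `(1/2, 1/2)` by this
common value, and the mean of a constant vector is that constant (functoriality along the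
map to a point, then consistency). -/

namespace MeanSystem

variable (S : MeanSystem) {n : ℕ} {w : Fin n → ℝ≥0}

theorem M_const (hw : ∑ i, w i = 1) (c : ℝ≥0) : S.M n w (fun _ => c) = c := by
  have hpush : (fun j : Fin 1 => ∑ i ∈ Finset.univ.filter (fun _ => (0 : Fin 1) = j), w i) =
      fun _ => 1 := by
    funext j
    simp [Subsingleton.elim j 0, hw]
  calc S.M n w (fun _ => c) = S.M n w ((fun _ : Fin 1 => c) ∘ fun _ => 0) := rfl
    _ = c := by rw [← S.functorial _ w hw, hpush, S.consistent]

theorem M_comp_perm (hw : ∑ i, w i = 1) (σ : Equiv.Perm (Fin n)) (x : Fin n → ℝ≥0) :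
    S.M n w (x ∘ σ) = S.M n (w ∘ σ.symm) x := by
  have hpush :
      (fun j => ∑ i ∈ Finset.univ.filter (fun i => σ i = j), w i) = w ∘ σ.symm := by
    funext j
    rw [Finset.sum_filter]
    simp [← Equiv.eq_symm_apply]
  rw [← S.functorial σ w hw, hpush]

theorem IsConvex.M_midpoint_perm_le {S : MeanSystem} (hS : S.IsConvex) (hw : ∑ i, w i = 1)
    (σ : Equiv.Perm (Fin n)) (hσ : w ∘ σ.symm = w) (x : Fin n → ℝ≥0) :
    S.M n w (fun i => (x i + x (σ i)) / 2) ≤ S.M n w x := by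
  have h := hS w x (x ∘ σ) hw
  rwa [S.M_comp_perm hw, hσ, max_self] at h

end MeanSystem

/-- For any convex system of means, `M((1/2, 1/2), (1, 0)) ≥ 1/2`. -/
theorem meanSystem_half_le (S : MeanSystem) (hconv : S.IsConvex) :
    (1 / 2 : ℝ≥0) ≤ S.M 2 ![1/2, 1/2] ![1, 0] := by
  have hw : ∑ i, (![1/2, 1/2] : Fin 2 → ℝ≥0) i = 1 := by
    rw [Fin.sum_univ_two]
    exact add_halves 1
  have hswap : (![1/2, 1/2] : Fin 2 → ℝ≥0) ∘ (Equiv.swap 0 1 : Equiv.Perm (Fin 2)).symm =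
      ![1/2, 1/2] := by
    funext i; fin_cases i <;> simp
  have hmid : (fun i => ((![1, 0] : Fin 2 → ℝ≥0) i + ![1, 0] (Equiv.swap 0 1 i)) / 2) =
      fun _ => 1 / 2 := by
    funext i; fin_cases i <;> simp
  calc (1 / 2 : ℝ≥0)
        = S.M 2 ![1/2, 1/2] (fun i => (![1, 0] i + ![1, 0] (Equiv.swap 0 1 i)) / 2) := by
          rw [hmid, S.M_const hw]
    _ ≤ S.M 2 ![1/2, 1/2] ![1, 0] := hconv.M_midpoint_perm_le hw _ hswap _
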